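/- arXiv:2210.13056 — 3 statements merged into one kernel-verified Lean document; each statement's English description precedes it below -/
import Mathlib

section
/- For every α > 0 and every n ∈ ℕ₀, the admissibility constant of the wavelet ψ_n^α equals C_{ψ_n^α} := ∫₀^∞ |𝓕ψ_n^α(t)|² t⁻¹ dt = 4π/α. -/
open MeasureTheory ComplexConjugate Set
open scoped ENNReal NNReal

noncomputable section

/-- Fourier transform with kernel `e^{-i ξ t}`. -/
def FTc (f : ℝ → ℂ) (ξ : ℝ) : ℂ :=
  ∫ t : ℝ, f t * Complex.exp (-(Complex.I * (ξ : ℂ) * (t : ℂ)))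

/-- Generalized Laguerre polynomial `L_n^α(t)`. -/
def laguerreL (n : ℕ) (α : ℝ) (t : ℝ) : ℝ :=
  ∑ k ∈ Finset.range (n + 1),
    (-1 : ℝ) ^ k / (Nat.factorial k : ℝ) *
      (Real.Gamma ((n : ℝ) + α + 1) /
        (Real.Gamma (α + (k : ℝ) + 1) * (Nat.factorial (n - k) : ℝ))) * t ^ k

/-- The Fourier transform of the wavelet `ψ_n^α`. -/
def psiHat (α : ℝ) (n : ℕ) (t : ℝ) : ℂ :=
  if 0 < t then
    ((Real.sqrt ((2 : ℝ) ^ (α + 2) * Real.pi * (Nat.factorial n : ℝ) /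
        Real.Gamma ((n : ℝ) + α + 1)) : ℝ) : ℂ) *
      ((t ^ (α / 2) : ℝ) : ℂ) * Complex.exp (-(t : ℂ)) * ((laguerreL n α (2 * t) : ℝ) : ℂ)
  else 0

/-- The wavelet `ψ_n^α`, obtained from `psiHat` by Fourier inversion. -/
def psiW (α : ℝ) (n : ℕ) (t : ℝ) : ℂ :=
  (1 / (2 * (Real.pi : ℂ))) * ∫ ξ : ℝ, psiHat α n ξ * Complex.exp (Complex.I * (ξ : ℂ) * (t : ℂ))

/-- The representation `π(z)ψ(t) = s^{-1/2} ψ((t-x)/s)`, for `z = x + i s`. -/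
def affRep (z : ℂ) (ψ : ℝ → ℂ) (t : ℝ) : ℂ :=
  ((Real.sqrt z.im : ℂ))⁻¹ * ψ ((t - z.re) / z.im)

/-- The `L²(ℝ)` inner product, linear in the first argument. -/
def innerL2 (f g : ℝ → ℂ) : ℂ := ∫ t : ℝ, f t * conj (g t)

/-- The continuous wavelet transform `W_ψ f (z) = ⟨f, π(z)ψ⟩`. -/
def waveT (ψ f : ℝ → ℂ) (z : ℂ) : ℂ := innerL2 f (affRep z ψ)

/-- Membership in the Hardy space `H²(ℂ⁺)`: an `L²` function whose Fourier transform
vanishes a.e. on the negative half-line, expressed by orthogonality to every nice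
function whose Fourier transform vanishes on `[0,∞)`. -/
def inHardy (f : ℝ → ℂ) : Prop :=
  MemLp f 2 (volume : Measure ℝ) ∧
    ∀ φ : ℝ → ℂ, Integrable φ (volume : Measure ℝ) → MemLp φ 2 (volume : Measure ℝ) →
      (∀ ξ : ℝ, 0 ≤ ξ → FTc φ ξ = 0) → ∫ t : ℝ, f t * conj (φ t) = 0

/-- The upper half plane. -/
def UHP : Set ℂ := {z : ℂ | 0 < z.im}

/-- The hyperbolic measure `dμ⁺(z) = Im(z)⁻² dA(z)` on the upper half plane. -/
def muPlus : Measure ℂ :=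
  ((volume : Measure ℂ).restrict UHP).withDensity fun z => ENNReal.ofReal (1 / z.im ^ 2)

/-- Jacobi polynomial `P_n^{(a,b)}(x)`. -/
def jacobiP (n : ℕ) (a b : ℝ) (x : ℝ) : ℝ :=
  Real.Gamma ((n : ℝ) + a + 1) / ((Nat.factorial n : ℝ) * Real.Gamma ((n : ℝ) + a + b + 1)) *
    ∑ k ∈ Finset.range (n + 1),
      (n.choose k : ℝ) *
        (Real.Gamma ((n : ℝ) + (k : ℝ) + a + b + 1) / Real.Gamma ((k : ℝ) + a + 1)) *
        ((x - 1) / 2) ^ k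

/-- Zernike-type function `Z_{n,m}^α(t)`. -/
def zernikeZ (n m : ℕ) (α : ℝ) (t : ℝ) : ℝ :=
  Real.sqrt (Real.Gamma ((max n m : ℝ) + α + 1) * (Nat.factorial (min n m) : ℝ) /
      (Real.Gamma ((min n m : ℝ) + α + 1) * (Nat.factorial (max n m) : ℝ))) *
    (-t) ^ (-(min n m : ℤ)) * jacobiP (min n m) (Nat.dist n m : ℝ) α (1 - 2 * t)

/-- Pseudohyperbolic disc of radius `R` centered at `z₀ ∈ ℂ⁺`. -/
def pDisc (R : ℝ) (z₀ : ℂ) : Set ℂ :=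
  {z : ℂ | 0 < z.im ∧ ‖z - z₀‖ < R * ‖z - conj z₀‖}

/-- The constant `C_n^α(R) = 4π ∫₀^{R²} (1-r)^{α-1} P_n^{(0,α)}(1-2r)² dr`. -/
def CnR (α : ℝ) (n : ℕ) (R : ℝ) : ℝ :=
  4 * Real.pi * ∫ r in (0:ℝ)..(R ^ 2), (1 - r) ^ (α - 1) * jacobiP n 0 α (1 - 2 * r) ^ 2

/-- The maximum Nyquist density `ρ(Δ, R)`. -/
def nyqDen (Δ : Set ℂ) (R : ℝ) : ℝ≥0∞ := ⨆ z ∈ UHP, muPlus (Δ ∩ pDisc R z)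

/-- The density `D_n^α(Δ, R)`. -/
def DnDen (α : ℝ) (n : ℕ) (Δ : Set ℂ) (R : ℝ) : ℝ≥0∞ :=
  ⨆ z ∈ UHP, ∫⁻ w in Δ ∩ pDisc R z,
    (‖innerL2 (affRep w (psiW α n)) (affRep z (psiW α n))‖₊ : ℝ≥0∞) ∂muPlus

/-- The admissibility constant `C_ψ = ∫₀^∞ |𝓕ψ(t)|² t⁻¹ dt` (as an extended real). -/
def admConst (ψ : ℝ → ℂ) : ℝ≥0∞ :=
  ∫⁻ t in Set.Ioi (0:ℝ), (‖FTc ψ t‖₊ : ℝ≥0∞) ^ 2 * (ENNReal.ofReal t)⁻¹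

/-- A wavelet is admissible if `0 < C_ψ < ∞`. -/
def admissible (ψ : ℝ → ℂ) : Prop := 0 < admConst ψ ∧ admConst ψ < ⊤

section AuxAdm
open Finset

lemma alt_sum_succ (n : ℕ) (f : ℕ → ℝ) :
    ∑ k ∈ Finset.range (n+2), (-1:ℝ)^k * ((n+1).choose k) * f k
      = ∑ k ∈ Finset.range (n+1), (-1:ℝ)^k * (n.choose k) * (f k - f (k+1)) := by
  have h1 : ∑ k ∈ Finset.range (n+2), (-1:ℝ)^k * ((n+1).choose k) * f k
      = f 0 + ∑ k ∈ Finset.range (n+1), (-1:ℝ)^(k+1) * ((n+1).choose (k+1)) * f (k+1) := by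
    rw [Finset.sum_range_succ' _ (n+1)]
    simp [add_comm]
  rw [h1]
  have h2 : ∀ k ∈ Finset.range (n+1), (-1:ℝ)^(k+1) * ((n+1).choose (k+1)) * f (k+1)
      = -((-1:ℝ)^k * (n.choose k) * f (k+1)) - (-1:ℝ)^k * (n.choose (k+1)) * f (k+1) := by
    intro k _
    rw [Nat.choose_succ_succ]
    push_cast
    ring
  rw [Finset.sum_congr rfl h2, Finset.sum_sub_distrib]
  have h3 : ∑ k ∈ Finset.range (n+1), (-1:ℝ)^k * (n.choose (k+1)) * f (k+1)
      = f 0 - ∑ k ∈ Finset.range (n+1), (-1:ℝ)^k * (n.choose k) * f k := by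
    rw [Finset.sum_range_succ _ n, Nat.choose_succ_self]
    rw [Finset.sum_range_succ' (fun k => (-1:ℝ)^k * (n.choose k) * f k) n]
    simp only [Nat.cast_zero, mul_zero, zero_mul, add_zero, pow_zero, Nat.choose_zero_right,
      Nat.cast_one, mul_one, one_mul]
    have h4 : ∀ k ∈ Finset.range n, (-1:ℝ)^(k+1) * (n.choose (k+1)) * f (k+1)
        = -((-1:ℝ)^k * (n.choose (k+1)) * f (k+1)) := fun k _ => by ring
    rw [Finset.sum_congr rfl h4, Finset.sum_neg_distrib]
    ring
  rw [h3]
  simp only [mul_sub, Finset.sum_sub_distrib, Finset.sum_neg_distrib]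
  ring

lemma alt_sum_poly (n : ℕ) (p : Polynomial ℝ) (hp : p.degree < n) :
    ∑ k ∈ Finset.range (n+1), (-1:ℝ)^k * (n.choose k) * p.eval (k : ℝ) = 0 := by
  induction n generalizing p with
  | zero =>
      have : p = 0 := by
        rw [← Polynomial.degree_eq_bot]
        exact Nat.WithBot.lt_zero_iff.mp (by exact_mod_cast hp)
      simp [this]
  | succ n ih =>
      rcases eq_or_ne p 0 with rfl | hp0
      · simp
      rw [alt_sum_succ n (fun k => p.eval (k : ℝ))]
      have key : ∀ k ∈ Finset.range (n+1),
          (-1:ℝ)^k * (n.choose k) * (p.eval (k:ℝ) - p.eval ((k+1:ℕ):ℝ))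
          = (-1:ℝ)^k * (n.choose k) * (p - p.comp (Polynomial.X + Polynomial.C 1)).eval (k:ℝ) := by
        intro k _
        simp only [Polynomial.eval_sub, Polynomial.eval_comp, Polynomial.eval_add,
          Polynomial.eval_X, Polynomial.eval_C]
        push_cast
        ring
      rw [Finset.sum_congr rfl key]
      apply ih
      have hq1 : (Polynomial.X + Polynomial.C (1:ℝ)).natDegree = 1 := by
        simpa using Polynomial.natDegree_X_add_C (1:ℝ)
      have hlc : (p.comp (Polynomial.X + Polynomial.C 1)).leadingCoeff = p.leadingCoeff := by
        rw [Polynomial.leadingCoeff_comp (by rw [hq1]; norm_num)]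
        have : (Polynomial.X + Polynomial.C (1:ℝ)).leadingCoeff = 1 :=
          Polynomial.leadingCoeff_X_add_C (1:ℝ)
        rw [this, one_pow, mul_one]
      have hc0 : p.comp (Polynomial.X + Polynomial.C 1) ≠ 0 := by
        intro h
        apply hp0
        rw [← Polynomial.leadingCoeff_eq_zero, ← hlc, h, Polynomial.leadingCoeff_zero]
      have hd : (p.comp (Polynomial.X + Polynomial.C 1)).degree = p.degree := by
        rw [Polynomial.degree_eq_natDegree hc0, Polynomial.degree_eq_natDegree hp0,
          Polynomial.natDegree_comp, hq1, mul_one]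
      have := Polynomial.degree_sub_lt hd.symm hp0 hlc.symm
      calc (p - p.comp (Polynomial.X + Polynomial.C 1)).degree < p.degree := this
        _ ≤ n := by
            have := hp
            exact Order.lt_succ_iff.mp (by exact_mod_cast hp)

lemma prod_pos_of (n : ℕ) {α : ℝ} (hα : 0 < α) : 0 < ∏ i ∈ Finset.range n, (α + i) :=
  Finset.prod_pos fun i _ => by positivity

lemma alt_sum_inv (n : ℕ) : ∀ α : ℝ, 0 < α →
    ∑ k ∈ Finset.range (n+1), (-1:ℝ)^k * (n.choose k) * (α + k)⁻¹
      = (n.factorial : ℝ) / ∏ i ∈ Finset.range (n+1), (α + i) := by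
  induction n with
  | zero => intro α hα; simp [div_eq_mul_inv]
  | succ n ih =>
      intro α hα
      rw [alt_sum_succ n (fun k => (α + k)⁻¹)]
      have step : ∀ k ∈ Finset.range (n+1), (-1:ℝ)^k * (n.choose k) * ((α + k)⁻¹ - (α + (k+1:ℕ))⁻¹)
          = (-1:ℝ)^k * (n.choose k) * (α+k)⁻¹ - (-1:ℝ)^k * (n.choose k) * ((α+1) + k)⁻¹ := by
        intro k _
        push_cast
        ring_nf
      rw [Finset.sum_congr rfl step, Finset.sum_sub_distrib, ih α hα, ih (α+1) (by linarith)]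
      have hA : (0:ℝ) < ∏ i ∈ Finset.range (n+1), (α + i) := prod_pos_of _ hα
      have hB : (0:ℝ) < ∏ i ∈ Finset.range (n+1), ((α+1) + i) := prod_pos_of _ (by linarith)
      have hC : (0:ℝ) < ∏ i ∈ Finset.range (n+2), (α + i) := prod_pos_of _ hα
      have e1 : ∏ i ∈ Finset.range (n+2), (α + i) = (∏ i ∈ Finset.range (n+1), (α + i)) * (α + (n+1)) := by
        rw [Finset.prod_range_succ]; push_cast; ring
      have e2 : ∏ i ∈ Finset.range (n+2), (α + i) = α * ∏ i ∈ Finset.range (n+1), ((α+1) + i) := by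
        rw [Finset.prod_range_succ', mul_comm]
        congr 1
        · norm_num
        · exact Finset.prod_congr rfl fun i _ => by push_cast; ring
      have hA' : ∏ i ∈ Finset.range (n+1), (α+(i:ℝ)) = (∏ i ∈ Finset.range (n+2), (α+(i:ℝ))) / (α+((n:ℝ)+1)) := by
        rw [e1, mul_div_cancel_right₀ _ (by positivity : α+((n:ℝ)+1) ≠ 0)]
      have hB' : ∏ i ∈ Finset.range (n+1), ((α+1)+(i:ℝ)) = (∏ i ∈ Finset.range (n+2), (α+(i:ℝ))) / α := by
        rw [e2, mul_div_cancel_left₀ _ (ne_of_gt hα)]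
      rw [hA', hB']
      simp only [show n+1+1 = n+2 from rfl]
      rw [div_div_eq_mul_div, div_div_eq_mul_div]
      push_cast [Nat.factorial_succ]
      rw [div_sub_div _ _ (ne_of_gt hC) (ne_of_gt hC), div_eq_div_iff (by positivity) (ne_of_gt hC)]
      ring

lemma Gamma_prod (m : ℕ) {α : ℝ} (hα : 0 < α) :
    Real.Gamma (α + m) = Real.Gamma α * ∏ i ∈ Finset.range m, (α + i) := by
  induction m with
  | zero => simp
  | succ m ih =>
      have h1 : α + (m+1:ℕ) = (α + m) + 1 := by push_cast; ring
      rw [h1, Real.Gamma_add_one (by positivity), ih, Finset.prod_range_succ]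
      ring

noncomputable def lagC (n : ℕ) (α : ℝ) (k : ℕ) : ℝ :=
  (-1 : ℝ) ^ k / (Nat.factorial k : ℝ) *
    (Real.Gamma ((n : ℝ) + α + 1) /
      (Real.Gamma (α + (k : ℝ) + 1) * (Nat.factorial (n - k) : ℝ)))

lemma lagC_gamma_sum {α : ℝ} (hα : 0 < α) (n : ℕ) (j : ℕ) (hj : j ≤ n) :
    ∑ k ∈ Finset.range (n+1), lagC n α k * Real.Gamma (α + j + k)
      = if j = 0 then Real.Gamma α else 0 := by
  have hΓpos : ∀ x : ℝ, 0 < x → 0 < Real.Gamma x := fun x hx => Real.Gamma_pos_of_pos hx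
  rcases Nat.eq_zero_or_pos j with rfl | hj1
  · -- j = 0 case
    simp only [if_pos rfl]
    have key : ∀ k ∈ Finset.range (n+1), lagC n α k * Real.Gamma (α + (0:ℕ) + k)
        = Real.Gamma ((n:ℝ) + α + 1) / (n.factorial : ℝ)
            * ((-1:ℝ)^k * (n.choose k) * (α + k)⁻¹) := by
      intro k hk
      have hkn : k ≤ n := Nat.lt_succ_iff.mp (Finset.mem_range.mp hk)
      have hαk : (0:ℝ) < α + k := by positivity
      have hg1 : Real.Gamma (α + (k:ℝ) + 1) = (α + k) * Real.Gamma (α + k) := by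
        rw [Real.Gamma_add_one (ne_of_gt hαk)]
      have hg2 : Real.Gamma (α + (0:ℕ) + (k:ℝ)) = Real.Gamma (α + k) := by norm_num
      rw [lagC, hg1, hg2]
      have hfac : ((n.choose k : ℝ)) * (k.factorial : ℝ) * ((n-k).factorial : ℝ) = (n.factorial : ℝ) := by
        exact_mod_cast congrArg Nat.cast (Nat.choose_mul_factorial_mul_factorial hkn)
      have h1 : (k.factorial : ℝ) ≠ 0 := by positivity
      have h2 : ((n-k).factorial : ℝ) ≠ 0 := by positivity
      have h3 : Real.Gamma (α + k) ≠ 0 := ne_of_gt (hΓpos _ (by positivity))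
      have h4 : (n.factorial : ℝ) ≠ 0 := by positivity
      field_simp
      rw [← hfac]
      ring
    rw [Finset.sum_congr rfl key, ← Finset.mul_sum, alt_sum_inv n α hα]
    have hGam := Gamma_prod (n+1) hα
    have harg : α + ((n+1:ℕ):ℝ) = (n:ℝ) + α + 1 := by push_cast; ring
    rw [harg] at hGam
    have hP : (0:ℝ) < ∏ i ∈ Finset.range (n+1), (α + i) := prod_pos_of _ hα
    have h4 : (n.factorial : ℝ) ≠ 0 := by positivity
    have hΓα : Real.Gamma α ≠ 0 := ne_of_gt (hΓpos _ hα)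
    simp only [if_true]
    rw [hGam]
    field_simp
  · rw [if_neg (Nat.pos_iff_ne_zero.mp hj1)]
    set p : Polynomial ℝ := ∏ i ∈ Finset.range (j-1), (Polynomial.X + Polynomial.C (α + 1 + i)) with hp
    have key : ∀ k ∈ Finset.range (n+1), lagC n α k * Real.Gamma (α + j + k)
        = Real.Gamma ((n:ℝ)+α+1) / (n.factorial : ℝ) * ((-1:ℝ)^k * (n.choose k) * p.eval (k:ℝ)) := by
      intro k hk
      have hkn : k ≤ n := Nat.lt_succ_iff.mp (Finset.mem_range.mp hk)
      have hbase : (0:ℝ) < α + k + 1 := by positivity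
      have hg := Gamma_prod (j-1) hbase
      have harg : (α + (k:ℝ) + 1) + ((j-1:ℕ):ℝ) = α + j + k := by
        have hc : ((j-1:ℕ):ℝ) = (j:ℝ) - 1 := by
          rw [Nat.cast_sub hj1]; norm_num
        rw [hc]; ring
      rw [harg] at hg
      rw [hg]
      have hev : p.eval (k:ℝ) = ∏ i ∈ Finset.range (j-1), ((α + (k:ℝ) + 1) + i) := by
        rw [hp, Polynomial.eval_prod]
        exact Finset.prod_congr rfl fun i _ => by
          simp [Polynomial.eval_add]; ring
      rw [hev, lagC]
      have hfac : ((n.choose k : ℝ)) * (k.factorial : ℝ) * ((n-k).factorial : ℝ) = (n.factorial : ℝ) := by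
        exact_mod_cast congrArg Nat.cast (Nat.choose_mul_factorial_mul_factorial hkn)
      have h1 : (k.factorial : ℝ) ≠ 0 := by positivity
      have h2 : ((n-k).factorial : ℝ) ≠ 0 := by positivity
      have h3 : Real.Gamma (α + (k:ℝ) + 1) ≠ 0 := ne_of_gt (hΓpos _ hbase)
      have h4 : (n.factorial : ℝ) ≠ 0 := by positivity
      field_simp
      rw [← hfac]
      ring
    rw [Finset.sum_congr rfl key, ← Finset.mul_sum]
    have hdeg : p.degree < (n : WithBot ℕ) := by
      have hd1 : p.degree = ((j-1 : ℕ) : WithBot ℕ) := by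
        rw [hp, Polynomial.degree_prod]
        have : ∀ i ∈ Finset.range (j-1),
            (Polynomial.X + Polynomial.C (α + 1 + (i:ℝ))).degree = 1 := fun i _ =>
          Polynomial.degree_X_add_C _
        rw [Finset.sum_congr rfl this, Finset.sum_const, Finset.card_range]
        simp
      rw [hd1]
      exact_mod_cast (by omega : j - 1 < n)
    rw [alt_sum_poly n p hdeg, mul_zero]

open MeasureTheory Set in
lemma lag_integral {α : ℝ} (hα : 0 < α) (n : ℕ) :
    ∫ x in Set.Ioi (0:ℝ), Real.exp (-x) * x ^ (α - 1) * (laguerreL n α x)^2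
      = Real.Gamma ((n:ℝ) + α + 1) / (α * (n.factorial : ℝ)) := by
  have hΓpos : ∀ x : ℝ, 0 < x → 0 < Real.Gamma x := fun x hx => Real.Gamma_pos_of_pos hx
  have hpt : ∀ x ∈ Set.Ioi (0:ℝ),
      Real.exp (-x) * x ^ (α - 1) * (laguerreL n α x)^2
      = ∑ j ∈ Finset.range (n+1), ∑ k ∈ Finset.range (n+1),
          (lagC n α j * lagC n α k) * (Real.exp (-x) * x ^ ((α + j + k) - 1)) := by
    intro x hx
    have hx' : (0:ℝ) < x := hx
    have hL : laguerreL n α x = ∑ k ∈ Finset.range (n+1), lagC n α k * x^k := rfl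
    rw [hL, sq, Finset.sum_mul_sum, Finset.mul_sum]
    refine Finset.sum_congr rfl fun j _ => ?_
    rw [Finset.mul_sum]
    refine Finset.sum_congr rfl fun k _ => ?_
    have h1 : x ^ ((α + j + k) - 1) = x ^ (α-1) * x^(j:ℕ) * x^(k:ℕ) := by
      rw [show ((α + (j:ℝ) + (k:ℝ)) - 1) = ((α-1) + (j:ℝ)) + (k:ℝ) by ring]
      rw [Real.rpow_add hx', Real.rpow_add hx', Real.rpow_natCast, Real.rpow_natCast]
    rw [h1]; ring
  rw [setIntegral_congr_fun measurableSet_Ioi hpt]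
  have hint : ∀ (j k : ℕ), IntegrableOn
      (fun x => (lagC n α j * lagC n α k) * (Real.exp (-x) * x ^ ((α + j + k) - 1)))
      (Set.Ioi (0:ℝ)) := fun j k =>
    (Real.GammaIntegral_convergent (by positivity : (0:ℝ) < α + j + k)).const_mul _
  rw [integral_finset_sum _ (fun j _ => integrable_finset_sum _ (fun k _ => hint j k))]
  have hswap : ∀ j ∈ Finset.range (n+1),
      (∫ x in Set.Ioi (0:ℝ), ∑ k ∈ Finset.range (n+1),
          (lagC n α j * lagC n α k) * (Real.exp (-x) * x ^ ((α + j + k) - 1)))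
      = lagC n α j * ∑ k ∈ Finset.range (n+1), lagC n α k * Real.Gamma (α + j + k) := by
    intro j _
    rw [integral_finset_sum _ (fun k _ => hint j k), Finset.mul_sum]
    refine Finset.sum_congr rfl fun k _ => ?_
    rw [MeasureTheory.integral_const_mul, ← Real.Gamma_eq_integral (by positivity : (0:ℝ) < α + j + k)]
    ring
  rw [Finset.sum_congr rfl hswap]
  have hval : ∀ j ∈ Finset.range (n+1),
      lagC n α j * ∑ k ∈ Finset.range (n+1), lagC n α k * Real.Gamma (α + j + k)
      = if j = 0 then lagC n α 0 * Real.Gamma α else 0 := by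
    intro j hj
    rw [lagC_gamma_sum hα n j (Nat.lt_succ_iff.mp (Finset.mem_range.mp hj))]
    rcases eq_or_ne j 0 with rfl | h0
    · simp
    · simp [h0]
  rw [Finset.sum_congr rfl hval, Finset.sum_ite_eq' (Finset.range (n+1)) 0 (fun _ => lagC n α 0 * Real.Gamma α)]
  simp only [Finset.mem_range, Nat.succ_pos, if_pos, Nat.zero_lt_succ, if_true]
  have : lagC n α 0 = Real.Gamma ((n:ℝ)+α+1) / (Real.Gamma (α+1) * (n.factorial : ℝ)) := by
    simp [lagC]
  rw [this, Real.Gamma_add_one (ne_of_gt hα)]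
  have h1 : Real.Gamma α ≠ 0 := ne_of_gt (hΓpos _ hα)
  have h4 : (n.factorial : ℝ) ≠ 0 := by positivity
  field_simp


end AuxAdm

/-- the admissibility constant of `ψ_n^α` equals `4π/α`. -/
theorem admissibility_constant_psi (α : ℝ) (hα : 0 < α) (n : ℕ) :
    ∫ t in Set.Ioi (0:ℝ), ‖psiHat α n t‖ ^ 2 / t = 4 * Real.pi / α := by
  have hΓ : 0 < Real.Gamma ((n : ℝ) + α + 1) := Real.Gamma_pos_of_pos (by positivity)
  set C : ℝ := (2 : ℝ) ^ (α + 2) * Real.pi * (Nat.factorial n : ℝ) / Real.Gamma ((n : ℝ) + α + 1)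
    with hCdef
  have hC : 0 ≤ C := by positivity
  have h2a : (0:ℝ) < (2:ℝ) ^ (α - 1) := Real.rpow_pos_of_pos (by norm_num) _
  have hpt : ∀ t ∈ Set.Ioi (0:ℝ), ‖psiHat α n t‖ ^ 2 / t
      = (C / (2:ℝ) ^ (α - 1) * 2) *
        ((2:ℝ)⁻¹ * (Real.exp (-(2*t)) * (2*t) ^ (α - 1) * (laguerreL n α (2*t))^2)) := by
    intro t ht
    have ht' : (0:ℝ) < t := ht
    rw [psiHat, if_pos ht']
    simp only [norm_mul, Complex.norm_real, Real.norm_eq_abs, Complex.norm_exp,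
      Complex.neg_re, Complex.ofReal_re]
    rw [abs_of_nonneg (Real.sqrt_nonneg _), abs_of_nonneg (Real.rpow_nonneg ht'.le _)]
    have e1 : Real.sqrt C ^ 2 = C := Real.sq_sqrt hC
    have e2 : (t ^ (α/2) : ℝ) ^ 2 = t ^ α := by
      rw [← Real.rpow_natCast (t ^ (α/2)) 2, ← Real.rpow_mul ht'.le]
      norm_num
    have e3 : Real.exp (-t) ^ 2 = Real.exp (-(2*t)) := by
      rw [sq, ← Real.exp_add]; ring_nf
    have e4 : t ^ α = t * t ^ (α - 1) := by
      have h : t ^ α = t ^ ((1:ℝ) + (α-1)) := by norm_num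
      rw [h, Real.rpow_add ht', Real.rpow_one]
    have e5 : ((2:ℝ)*t) ^ (α - 1) = (2:ℝ) ^ (α-1) * t ^ (α-1) :=
      Real.mul_rpow (by norm_num) ht'.le
    rw [div_eq_iff (ne_of_gt ht')]
    rw [mul_pow, mul_pow, mul_pow, e1, e2, sq_abs, e3, e4, e5]
    field_simp
  rw [setIntegral_congr_fun measurableSet_Ioi hpt, MeasureTheory.integral_const_mul]
  have hcomp : (∫ t in Set.Ioi (0:ℝ),
      (2:ℝ)⁻¹ * (Real.exp (-(2*t)) * (2*t) ^ (α - 1) * (laguerreL n α (2*t))^2))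
      = (2:ℝ)⁻¹ * ∫ t in Set.Ioi (0:ℝ), Real.exp (-(2*t)) * (2*t) ^ (α - 1) * (laguerreL n α (2*t))^2 :=
    MeasureTheory.integral_const_mul _ _
  rw [hcomp]
  have hsub := integral_comp_mul_left_Ioi
    (fun x => Real.exp (-x) * x ^ (α - 1) * (laguerreL n α x)^2) 0 (by norm_num : (0:ℝ) < 2)
  simp only [mul_zero, smul_eq_mul] at hsub
  rw [hsub, lag_integral hα n]
  have hfac : (0:ℝ) < (n.factorial : ℝ) := by positivity
  have h8 : (2:ℝ) ^ (α + 2) = (2:ℝ) ^ (α - 1) * 8 := by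
    have h3 : ((2:ℝ)) ^ (((3:ℕ)):ℝ) = 8 := by
      rw [Real.rpow_natCast]; norm_num
    rw [show α + 2 = (α - 1) + (((3:ℕ)):ℝ) by push_cast; ring,
      Real.rpow_add (by norm_num : (0:ℝ) < 2), h3]
  rw [hCdef, h8]
  field_simp
  ring


end
end

section
/- Let ψ ∈ H²(ℂ⁺) be admissible and let Δ ⊆ ℂ⁺ be measurable such that for every nonzero g ∈ H²(ℂ⁺) with W_ψg ∈ L¹(ℂ⁺, μ⁺) one has ∫_Δ |W_ψg| dμ⁺ < (1/2) ∫_{ℂ⁺} |W_ψg| dμ⁺. If f, h ∈ H²(ℂ⁺) satisfy W_ψf, W_ψh ∈ L¹(ℂ⁺, μ⁺), W_ψh(z) = W_ψf(z) for all z ∈ ℂ⁺ \ Δ, and ∫_{ℂ⁺} |W_ψh| dμ⁺ ≤ ∫_{ℂ⁺} |W_ψf| dμ⁺, then h = f. (Thus W_ψf is the unique solution of the L¹-minimization problem of minimizing ‖W_ψh‖_{L¹(μ⁺)} subject to W_ψh = W_ψf on Δ^c.) -/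
open MeasureTheory ComplexConjugate Set
open scoped ENNReal NNReal

noncomputable section

private lemma memL2_conj {g : ℝ → ℂ} (hg : MemLp g 2 (volume : Measure ℝ)) :
    MemLp (fun t => conj (g t)) 2 (volume : Measure ℝ) := by
  refine hg.of_le (continuous_star.comp_aestronglyMeasurable hg.1) ?_
  filter_upwards with t
  simp

private lemma integrable_mul_conj {f g : ℝ → ℂ} (hf : MemLp f 2 (volume : Measure ℝ))
    (hg : MemLp g 2 (volume : Measure ℝ)) :
    Integrable (fun t => f t * conj (g t)) (volume : Measure ℝ) := by
  have h : MemLp ((fun t => f t) • fun t => conj (g t)) 1 (volume : Measure ℝ) :=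
    MemLp.smul (r := 1) (memL2_conj hg) hf
  exact memLp_one_iff_integrable.mp h

private lemma memL2_affRep (ψ : ℝ → ℂ) (hψ : MemLp ψ 2 (volume : Measure ℝ)) (z : ℂ) :
    MemLp (affRep z ψ) 2 (volume : Measure ℝ) := by
  by_cases hs : 0 < z.im
  · have h1 : MemLp (fun u : ℝ => ψ (u * z.im⁻¹)) 2 (volume : Measure ℝ) := by
      have hmap : MemLp ψ 2 (Measure.map (· * z.im⁻¹) (volume : Measure ℝ)) := by
        rw [Real.map_volume_mul_right (inv_ne_zero hs.ne')]
        exact hψ.smul_measure ENNReal.ofReal_ne_top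
      exact hmap.comp_of_map (measurable_id.mul_const _).aemeasurable
    have h2 : MemLp (fun t : ℝ => ψ ((t - z.re) * z.im⁻¹)) 2 (volume : Measure ℝ) :=
      h1.comp_measurePreserving (measurePreserving_sub_right volume z.re)
    have h3 := h2.const_mul (((Real.sqrt z.im : ℝ) : ℂ))⁻¹
    have heq : affRep z ψ = fun t : ℝ => (((Real.sqrt z.im : ℝ) : ℂ))⁻¹ * ψ ((t - z.re) * z.im⁻¹) := by
      funext t; simp [affRep, div_eq_mul_inv]
    rw [heq]; exact h3
  · have hz : affRep z ψ = fun _ => 0 := by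
      funext t
      have : Real.sqrt z.im = 0 := Real.sqrt_eq_zero'.mpr (not_lt.mp hs)
      simp [affRep, this]
    rw [hz]
    exact MemLp.zero'

private lemma measurableSet_UHP : MeasurableSet UHP :=
  measurableSet_lt measurable_const Complex.measurable_im

private lemma muPlus_compl_UHP : muPlus UHPᶜ = 0 := by
  rw [muPlus, withDensity_apply _ measurableSet_UHP.compl,
    Measure.restrict_restrict measurableSet_UHP.compl, compl_inter_self]
  simp

/-- perfect reconstruction by `L¹`-minimization on sets of low
wavelet concentration. -/
theorem l1_minimization_recovery (ψ : ℝ → ℂ) (hψH : inHardy ψ) (hψadm : admissible ψ)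
    (Δ : Set ℂ) (hΔm : MeasurableSet Δ) (hΔ : Δ ⊆ UHP)
    (hsieve : ∀ g : ℝ → ℂ, inHardy g → ¬ g =ᵐ[(volume : Measure ℝ)] (0 : ℝ → ℂ) →
      Integrable (waveT ψ g) muPlus →
      ∫ z in Δ, ‖waveT ψ g z‖ ∂muPlus < (1 / 2) * ∫ z, ‖waveT ψ g z‖ ∂muPlus)
    (f h : ℝ → ℂ) (hf : inHardy f) (hh : inHardy h)
    (hfI : Integrable (waveT ψ f) muPlus) (hhI : Integrable (waveT ψ h) muPlus)
    (hagree : ∀ z ∈ UHP \ Δ, waveT ψ h z = waveT ψ f z)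
    (hmin : ∫ z, ‖waveT ψ h z‖ ∂muPlus ≤ ∫ z, ‖waveT ψ f z‖ ∂muPlus) :
    h =ᵐ[(volume : Measure ℝ)] f := by
  classical
  set g : ℝ → ℂ := fun t => h t - f t with hgdef
  have hg2 : MemLp g 2 (volume : Measure ℝ) := hh.1.sub hf.1
  have hgH : inHardy g := by
    refine ⟨hg2, fun φ hφI hφ2 hφF => ?_⟩
    have h1 := hh.2 φ hφI hφ2 hφF
    have h2 := hf.2 φ hφI hφ2 hφF
    have hsub : ∫ t : ℝ, g t * conj (φ t)
        = (∫ t : ℝ, h t * conj (φ t)) - ∫ t : ℝ, f t * conj (φ t) := by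
      rw [← integral_sub (integrable_mul_conj hh.1 hφ2) (integrable_mul_conj hf.1 hφ2)]
      congr 1; funext t; simp [hgdef, sub_mul]
    rw [hsub, h1, h2, sub_zero]
  have hWlin : ∀ z : ℂ, waveT ψ g z = waveT ψ h z - waveT ψ f z := by
    intro z
    have hA := memL2_affRep ψ hψH.1 z
    unfold waveT innerL2
    rw [← integral_sub (integrable_mul_conj hh.1 hA) (integrable_mul_conj hf.1 hA)]
    congr 1; funext t; simp [hgdef, sub_mul]
  have hWgI : Integrable (waveT ψ g) muPlus := by
    have : waveT ψ g = fun z => waveT ψ h z - waveT ψ f z := funext hWlin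
    rw [this]; exact hhI.sub hfI
  have hWg0 : ∀ z ∈ UHP \ Δ, waveT ψ g z = 0 := by
    intro z hz
    rw [hWlin, hagree z hz, sub_self]
  by_contra hne
  have hgne : ¬ g =ᵐ[(volume : Measure ℝ)] (0 : ℝ → ℂ) := by
    intro hz
    apply hne
    filter_upwards [hz] with t ht
    have h0 : h t - f t = 0 := ht
    exact sub_eq_zero.mp h0
  have key := hsieve g hgH hgne hWgI
  have haeU : ∀ᵐ z ∂muPlus, z ∈ UHP := by
    rw [ae_iff]
    exact muPlus_compl_UHP
  have hcompl : ∫ z in Δᶜ, ‖waveT ψ g z‖ ∂muPlus = 0 := by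
    have hae0 : ∀ᵐ z ∂muPlus.restrict Δᶜ, ‖waveT ψ g z‖ = 0 := by
      rw [ae_restrict_iff' hΔm.compl]
      filter_upwards [haeU] with z hzU hzc
      rw [hWg0 z ⟨hzU, hzc⟩, norm_zero]
    exact integral_eq_zero_of_ae hae0
  have hsplit : ∫ z, ‖waveT ψ g z‖ ∂muPlus = ∫ z in Δ, ‖waveT ψ g z‖ ∂muPlus := by
    rw [← integral_add_compl hΔm hWgI.norm, hcompl, add_zero]
  have hnn : 0 ≤ ∫ z in Δ, ‖waveT ψ g z‖ ∂muPlus :=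
    integral_nonneg fun z => norm_nonneg _
  rw [hsplit] at key
  linarith

end
end

section
/- Let n, m ∈ ℕ₀, α > 0, and z ∈ ℂ with z ≠ 0. Then Σ_{k=0}^{min(n,m)} ((−n)_k (−m)_k / ((−n−m−α)_k · k!)) z^k = (min(n,m)! · Γ(max(n,m)+α+1) / Γ(n+m+α+1)) · (−z)^{min(n,m)} · P_{min(n,m)}^{(|n−m|, α)}(1 − 2/z), where (x)_k = x(x+1)⋯(x+k−1) denotes the Pochhammer rising factorial. -/
open MeasureTheory ComplexConjugate Set
open scoped ENNReal NNReal

noncomputable section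

/-- Pochhammer rising factorial `(x)_k = x(x+1)⋯(x+k-1)`. -/
def poch (x : ℝ) (k : ℕ) : ℝ := ∏ i ∈ Finset.range k, (x + (i : ℝ))

/-- Jacobi polynomial `P_n^{(a,b)}` with complex argument. -/
def jacobiC (n : ℕ) (a b : ℝ) (x : ℂ) : ℂ :=
  ((Real.Gamma ((n : ℝ) + a + 1) /
      ((Nat.factorial n : ℝ) * Real.Gamma ((n : ℝ) + a + b + 1)) : ℝ) : ℂ) *
    ∑ k ∈ Finset.range (n + 1),
      (((n.choose k : ℝ) *
          (Real.Gamma ((n : ℝ) + (k : ℝ) + a + b + 1) / Real.Gamma ((k : ℝ) + a + 1)) : ℝ) : ℂ) *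
        ((x - 1) / 2) ^ k

lemma poch_succ' (x : ℝ) (k : ℕ) : poch x (k + 1) = poch x k * (x + k) :=
  Finset.prod_range_succ _ _

lemma poch_neg_nat_mul (n : ℕ) : ∀ j : ℕ, j ≤ n →
    poch (-(n : ℝ)) j * ((n - j).factorial : ℝ) = (-1) ^ j * (n.factorial : ℝ) := by
  intro j
  induction j with
  | zero => intro _; simp [poch]
  | succ j ih =>
    intro h
    have hj : j ≤ n := by omega
    have ihj := ih hj
    have hfac : ((n - j).factorial : ℝ) = ((n : ℝ) - j) * ((n - (j + 1)).factorial : ℝ) := by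
      rw [show n - j = (n - (j + 1)) + 1 by omega, Nat.factorial_succ]
      push_cast [Nat.cast_sub h]
      ring
    rw [poch_succ']
    push_cast
    linear_combination (-1 : ℝ) * ihj + poch (-(n : ℝ)) j * hfac

lemma poch_neg_real_mul (s : ℝ) : ∀ j : ℕ, (j : ℝ) ≤ s →
    poch (-s) j * Real.Gamma (s + 1 - j) = (-1) ^ j * Real.Gamma (s + 1) := by
  intro j
  induction j with
  | zero => intro _; simp [poch]
  | succ j ih =>
    intro h
    have hj1 : ((j : ℝ) + 1) ≤ s := by push_cast at h; linarith
    have hj : (j : ℝ) ≤ s := by linarith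
    have ihj := ih hj
    have hpos : (0 : ℝ) < s - j := by linarith
    have hG : Real.Gamma (s + 1 - j) = (s - j) * Real.Gamma (s - j) := by
      rw [show s + 1 - (j : ℝ) = (s - j) + 1 by ring, Real.Gamma_add_one (ne_of_gt hpos)]
    rw [poch_succ']
    push_cast
    rw [show s + 1 - ((j : ℝ) + 1) = s - j by ring]
    linear_combination (-1 : ℝ) * ihj + poch (-s) j * hG

lemma hypergeometric_jacobi_aux (n m : ℕ) (hnm : n ≤ m) (α : ℝ) (hα : 0 < α)
    (z : ℂ) (hz : z ≠ 0) :
    ∑ k ∈ Finset.range (n + 1),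
        ((poch (-(n : ℝ)) k * poch (-(m : ℝ)) k /
            (poch (-(n : ℝ) - (m : ℝ) - α) k * (Nat.factorial k : ℝ)) : ℝ) : ℂ) * z ^ k =
      (((Nat.factorial n : ℝ) * Real.Gamma ((m : ℝ) + α + 1) /
          Real.Gamma ((n : ℝ) + (m : ℝ) + α + 1) : ℝ) : ℂ) *
        (-z) ^ n * jacobiC n ((m - n : ℕ) : ℝ) α (1 - 2 / z) := by
  have hd : ((m - n : ℕ) : ℝ) = (m : ℝ) - n := Nat.cast_sub hnm
  have hmn0 : (0 : ℝ) ≤ (m : ℝ) := Nat.cast_nonneg m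
  have hΓ1 : (0 : ℝ) < Real.Gamma ((n : ℝ) + m + α + 1) := by
    apply Real.Gamma_pos_of_pos; positivity
  have hΓ3 : (0 : ℝ) < Real.Gamma ((m : ℝ) + α + 1) := by
    apply Real.Gamma_pos_of_pos; positivity
  rw [jacobiC, show ((1 - 2 / z) - 1) / 2 = -(1 / z) from by ring]
  rw [Finset.mul_sum, Finset.mul_sum]
  conv_rhs => rw [← Finset.sum_range_reflect]
  simp only [Nat.add_sub_cancel]
  refine Finset.sum_congr rfl fun j hj => ?_
  have hjn : j ≤ n := Finset.mem_range_succ_iff.mp hj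
  have hjm : j ≤ m := hjn.trans hnm
  have hjR : (j : ℝ) ≤ (n : ℝ) := Nat.cast_le.mpr hjn
  have hcast_nj : ((n - j : ℕ) : ℝ) = (n : ℝ) - j := Nat.cast_sub hjn
  have hcast_mj : ((m - j : ℕ) : ℝ) = (m : ℝ) - j := Nat.cast_sub hjm
  have hΓ2 : (0 : ℝ) < Real.Gamma ((n : ℝ) + m + α + 1 - j) := by
    apply Real.Gamma_pos_of_pos; linarith
  have hfact : ∀ N : ℕ, ((N.factorial : ℝ)) ≠ 0 :=
    fun N => Nat.cast_ne_zero.mpr N.factorial_ne_zero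
  -- values of the Pochhammer symbols
  have hp1 : poch (-(n : ℝ)) j = (-1) ^ j * (n.factorial : ℝ) / ((n - j).factorial : ℝ) := by
    rw [eq_div_iff (hfact _)]; exact poch_neg_nat_mul n j hjn
  have hp2 : poch (-(m : ℝ)) j = (-1) ^ j * (m.factorial : ℝ) / ((m - j).factorial : ℝ) := by
    rw [eq_div_iff (hfact _)]; exact poch_neg_nat_mul m j hjm
  have hp3 : poch (-(n : ℝ) - m - α) j =
      (-1) ^ j * Real.Gamma ((n : ℝ) + m + α + 1) / Real.Gamma ((n : ℝ) + m + α + 1 - j) := by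
    rw [show -(n : ℝ) - m - α = -((n : ℝ) + m + α) from by ring, eq_div_iff (ne_of_gt hΓ2)]
    have hs : (j : ℝ) ≤ (n : ℝ) + m + α := by linarith
    exact poch_neg_real_mul ((n : ℝ) + m + α) j hs
  -- Gamma evaluations appearing in the Jacobi polynomial
  have hg1 : Real.Gamma ((n : ℝ) + ((m - n : ℕ) : ℝ) + 1) = (m.factorial : ℝ) := by
    rw [show (n : ℝ) + ((m - n : ℕ) : ℝ) + 1 = (m : ℝ) + 1 from by rw [hd]; ring,
      Real.Gamma_nat_eq_factorial]
  have hg2 : Real.Gamma ((n : ℝ) + ((n - j : ℕ) : ℝ) + ((m - n : ℕ) : ℝ) + α + 1) =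
      Real.Gamma ((n : ℝ) + m + α + 1 - j) := by
    rw [show (n : ℝ) + ((n - j : ℕ) : ℝ) + ((m - n : ℕ) : ℝ) + α + 1 =
      (n : ℝ) + m + α + 1 - j from by rw [hd, hcast_nj]; ring]
  have hg3 : Real.Gamma (((n - j : ℕ) : ℝ) + ((m - n : ℕ) : ℝ) + 1) =
      ((m - j).factorial : ℝ) := by
    rw [show ((n - j : ℕ) : ℝ) + ((m - n : ℕ) : ℝ) + 1 = ((m - j : ℕ) : ℝ) + 1 from by
      rw [hd, hcast_nj, hcast_mj]; ring, Real.Gamma_nat_eq_factorial]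
  have hg4 : Real.Gamma ((n : ℝ) + ((m - n : ℕ) : ℝ) + α + 1) =
      Real.Gamma ((m : ℝ) + α + 1) := by
    rw [show (n : ℝ) + ((m - n : ℕ) : ℝ) + α + 1 = (m : ℝ) + α + 1 from by rw [hd]; ring]
  have hchoose : ((n.choose (n - j)) : ℝ) =
      (n.factorial : ℝ) / ((j.factorial : ℝ) * ((n - j).factorial : ℝ)) := by
    rw [Nat.choose_symm hjn, Nat.cast_choose ℝ hjn]
  have hneg : ((-1 : ℝ)) ^ j ≠ 0 := by positivity
  -- the key real identity
  have hcoeff : poch (-(n : ℝ)) j * poch (-(m : ℝ)) j /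
      (poch (-(n : ℝ) - m - α) j * (j.factorial : ℝ)) =
      ((n.factorial : ℝ) * Real.Gamma ((m : ℝ) + α + 1) /
          Real.Gamma ((n : ℝ) + (m : ℝ) + α + 1)) *
        (Real.Gamma ((n : ℝ) + ((m - n : ℕ) : ℝ) + 1) /
          ((n.factorial : ℝ) * Real.Gamma ((n : ℝ) + ((m - n : ℕ) : ℝ) + α + 1))) *
        (((n.choose (n - j)) : ℝ) *
          (Real.Gamma ((n : ℝ) + ((n - j : ℕ) : ℝ) + ((m - n : ℕ) : ℝ) + α + 1) /
            Real.Gamma (((n - j : ℕ) : ℝ) + ((m - n : ℕ) : ℝ) + 1))) * (-1) ^ j := by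
    rw [hp1, hp2, hp3, hg1, hg2, hg3, hg4, hchoose]
    field_simp
  -- the complex power identity
  have hzj : z ^ (n - j) ≠ 0 := pow_ne_zero _ hz
  have hpow : (-z) ^ n * (-(1 / z)) ^ (n - j) = (-1 : ℂ) ^ j * z ^ j := by
    have h3 : z ^ n = z ^ j * z ^ (n - j) := by rw [← pow_add]; congr 1; omega
    have h4 : (-1 : ℂ) ^ n * (-1 : ℂ) ^ (n - j) = (-1) ^ j := by
      rw [← pow_add, show n + (n - j) = j + 2 * (n - j) by omega, pow_add, pow_mul]
      norm_num
    rw [neg_pow z, neg_pow (1 / z), one_div, inv_pow, h3]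
    field_simp
    linear_combination h4
  have hC : ((poch (-(n : ℝ)) j * poch (-(m : ℝ)) j /
        (poch (-(n : ℝ) - (m : ℝ) - α) j * (Nat.factorial j : ℝ)) : ℝ) : ℂ) =
      (((Nat.factorial n : ℝ) * Real.Gamma ((m : ℝ) + α + 1) /
          Real.Gamma ((n : ℝ) + (m : ℝ) + α + 1) : ℝ) : ℂ) *
        ((Real.Gamma ((n : ℝ) + ((m - n : ℕ) : ℝ) + 1) /
          ((n.factorial : ℝ) * Real.Gamma ((n : ℝ) + ((m - n : ℕ) : ℝ) + α + 1)) : ℝ) : ℂ) *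
        ((((n.choose (n - j)) : ℝ) *
          (Real.Gamma ((n : ℝ) + ((n - j : ℕ) : ℝ) + ((m - n : ℕ) : ℝ) + α + 1) /
            Real.Gamma (((n - j : ℕ) : ℝ) + ((m - n : ℕ) : ℝ) + 1)) : ℝ) : ℂ) *
        (-1 : ℂ) ^ j := by
    rw [hcoeff]; push_cast; ring
  rw [hC]
  linear_combination
    (-(((Nat.factorial n : ℝ) * Real.Gamma ((m : ℝ) + α + 1) /
          Real.Gamma ((n : ℝ) + (m : ℝ) + α + 1) : ℝ) : ℂ) *
        ((Real.Gamma ((n : ℝ) + ((m - n : ℕ) : ℝ) + 1) /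
          ((n.factorial : ℝ) * Real.Gamma ((n : ℝ) + ((m - n : ℕ) : ℝ) + α + 1)) : ℝ) : ℂ) *
        ((((n.choose (n - j)) : ℝ) *
          (Real.Gamma ((n : ℝ) + ((n - j : ℕ) : ℝ) + ((m - n : ℕ) : ℝ) + α + 1) /
            Real.Gamma (((n - j : ℕ) : ℝ) + ((m - n : ℕ) : ℝ) + 1)) : ℝ) : ℂ)) * hpow

/-- the terminating Gauss hypergeometric sum `F(-n,-m;-n-m-α;z)`
expressed through a Jacobi polynomial. -/
theorem hypergeometric_jacobi (n m : ℕ) (α : ℝ) (hα : 0 < α) (z : ℂ) (hz : z ≠ 0) :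
    ∑ k ∈ Finset.range (min n m + 1),
        ((poch (-(n : ℝ)) k * poch (-(m : ℝ)) k /
            (poch (-(n : ℝ) - (m : ℝ) - α) k * (Nat.factorial k : ℝ)) : ℝ) : ℂ) * z ^ k =
      (((Nat.factorial (min n m) : ℝ) * Real.Gamma ((max n m : ℝ) + α + 1) /
          Real.Gamma ((n : ℝ) + (m : ℝ) + α + 1) : ℝ) : ℂ) *
        (-z) ^ (min n m) * jacobiC (min n m) (Nat.dist n m : ℝ) α (1 - 2 / z) := by
  rcases le_total n m with h | h
  · simp only [min_eq_left h, max_eq_right (show (n:ℝ) ≤ (m:ℝ) from Nat.cast_le.mpr h), Nat.dist_eq_sub_of_le h]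
    exact hypergeometric_jacobi_aux n m h α hα z hz
  · simp only [min_eq_right h, max_eq_left (show (m:ℝ) ≤ (n:ℝ) from Nat.cast_le.mpr h), Nat.dist_comm n m, Nat.dist_eq_sub_of_le h]
    have H := hypergeometric_jacobi_aux m n h α hα z hz
    rw [show -(m : ℝ) - (n : ℝ) - α = -(n : ℝ) - (m : ℝ) - α from by ring,
      show (m : ℝ) + (n : ℝ) + α + 1 = (n : ℝ) + (m : ℝ) + α + 1 from by ring] at H
    rw [← H]
    refine Finset.sum_congr rfl fun k _ => ?_
    rw [mul_comm (poch (-(n : ℝ)) k) (poch (-(m : ℝ)) k)]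

end
end
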